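/- Let Φ=(f_1,…,f_n) be a polynomial automorphism of K^n, deg_1 the standard homogeneous degree, d_i = deg_1(f_i), and ∇ = d_1 + ⋯ + d_n − n (the parachute). Then for every polynomial P ∈ K[x_1,…,x_n] and every k ≥ 0: deg_1(P∘Φ) ≥ deg_1((∂^k P/∂x_n^k)∘Φ) + k·d_n − k·∇. -/

import Mathlib

/-!
By the chain rule the gradient of `P ∘ Φ` is `(grad P ∘ Φ) ⬝ J`, where `J` is the Jacobian matrix of
`Φ`; multiplying by the adjugate gives Cramer's rule
`det J * (∂ₙP ∘ Φ) = ∑ⱼ ∂ⱼ(P ∘ Φ) * adj(J)ⱼₙ`.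
The cofactor `adj(J)ⱼₙ` is a determinant whose rows are the gradients of the `fₐ` with `a ≠ n`
and one unit vector, so its degree is at most `∑_{a ≠ n} (dₐ - 1) = ∇ - dₙ + 1`. Since `J` is
invertible for an automorphism, `det J ≠ 0`, and degrees add in a domain, so
`deg(∂ₙP ∘ Φ) ≤ deg(P ∘ Φ) + ∇ - dₙ`. Iterating this `k` times gives the claim.
-/

open MvPolynomial
open scoped Matrix

namespace MvPolynomial

section CommSemiring

variable {R σ τ ι : Type*} [CommSemiring R]

theorem totalDegree_pderiv_le (i : σ) (p : MvPolynomial σ R) :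
    (pderiv i p).totalDegree ≤ p.totalDegree - 1 := by
  classical
  refine Finset.sup_le fun m hm => ?_
  rw [mem_support_iff, coeff_pderiv] at hm
  have hdeg := le_totalDegree (mem_support_iff.2 (left_ne_zero_of_mul hm))
  change (m + Finsupp.single i 1).degree ≤ _ at hdeg
  change m.degree ≤ _
  rw [map_add, Finsupp.degree_single] at hdeg
  omega

theorem pderiv_aeval [Fintype τ] (f : τ → MvPolynomial σ R) (j : σ) (p : MvPolynomial τ R) :
    pderiv j (aeval f p) = ∑ i, aeval f (pderiv i p) * pderiv j (f i) := by
  classical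
  induction p using MvPolynomial.induction_on with
  | C a => simp
  | add p q hp hq => simp only [map_add, hp, hq, add_mul, Finset.sum_add_distrib]
  | mul_X p i hp =>
    simp only [map_mul, aeval_X, pderiv_mul, hp, pderiv_X, map_add, add_mul, Finset.sum_add_distrib,
      Finset.sum_mul]
    congr 1
    · exact Finset.sum_congr rfl fun l _ => mul_right_comm _ _ _
    · simp [Pi.single_apply]

noncomputable def jacobian (f : τ → MvPolynomial σ R) : Matrix τ σ (MvPolynomial σ R) :=
  Matrix.of fun i j => pderiv j (f i)

theorem jacobian_aeval [Fintype τ] (g : ι → MvPolynomial τ R) (f : τ → MvPolynomial σ R) :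
    jacobian (fun i => aeval f (g i)) = (jacobian g).map (aeval f) * jacobian f := by
  ext i j
  simp only [jacobian, Matrix.of_apply, Matrix.mul_apply, Matrix.map_apply, pderiv_aeval]

end CommSemiring

section CommRing

variable {R σ : Type*} [CommRing R]

theorem totalDegree_det_le {m : Type*} [Fintype m] [DecidableEq m]
    (M : Matrix m m (MvPolynomial σ R)) (w : m → ℕ) (h : ∀ a b, (M a b).totalDegree ≤ w a) :
    M.det.totalDegree ≤ ∑ a, w a := by
  rw [Matrix.det_apply']
  refine totalDegree_finsetSum_le fun e _ => (totalDegree_mul _ _).trans ?_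
  rw [← map_intCast (C : R →+* MvPolynomial σ R), totalDegree_C, zero_add]
  calc (∏ i, M (e i) i).totalDegree ≤ ∑ i, (M (e i) i).totalDegree := totalDegree_finsetProd _ _
    _ ≤ ∑ i, w (e i) := Finset.sum_le_sum fun i _ => h (e i) i
    _ = ∑ a, w a := Equiv.sum_comp e w

variable [Fintype σ] [DecidableEq σ] (f : σ → MvPolynomial σ R)

theorem totalDegree_adjugate_jacobian_le (j L : σ) :
    ((jacobian f).adjugate j L).totalDegree ≤ ∑ a ∈ Finset.univ.erase L, ((f a).totalDegree - 1) := by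
  rw [Matrix.adjugate_apply]
  calc _ ≤ ∑ a, if a = L then 0 else (f a).totalDegree - 1 := by
        refine totalDegree_det_le _ _ fun a b => ?_
        split_ifs with ha
        · subst ha
          rw [Matrix.updateRow_self, Pi.single_apply]
          split_ifs <;> simp
        · rw [Matrix.updateRow_ne ha]
          exact totalDegree_pderiv_le b (f a)
    _ = _ := by
        rw [← Finset.sum_erase_add _ _ (Finset.mem_univ L), if_pos rfl, add_zero]
        exact Finset.sum_congr rfl fun a ha => if_neg (Finset.ne_of_mem_erase ha)

theorem det_jacobian_mul_aeval_pderiv (L : σ) (p : MvPolynomial σ R) :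
    (jacobian f).det * aeval f (pderiv L p) =
      ∑ j, pderiv j (aeval f p) * (jacobian f).adjugate j L := by
  set v : σ → MvPolynomial σ R := fun i => aeval f (pderiv i p)
  have hgrad : (fun j => pderiv j (aeval f p)) = v ᵥ* jacobian f := by
    ext j : 1
    exact pderiv_aeval f j p
  calc (jacobian f).det * v L = (v ᵥ* ((jacobian f).det • (1 : Matrix σ σ _))) L := by
        rw [Matrix.vecMul_smul, Matrix.vecMul_one, Pi.smul_apply, smul_eq_mul]
    _ = ((v ᵥ* jacobian f) ᵥ* (jacobian f).adjugate) L := by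
        rw [Matrix.vecMul_vecMul, Matrix.mul_adjugate]
    _ = _ := by rw [← hgrad]; rfl

theorem one_le_totalDegree_of_det_jacobian_ne_zero (hdet : (jacobian f).det ≠ 0) (a : σ) :
    1 ≤ (f a).totalDegree := by
  by_contra! h
  refine hdet (Matrix.det_eq_zero_of_row_eq_zero a fun b => ?_)
  rw [jacobian, Matrix.of_apply, totalDegree_eq_zero_iff_eq_C.1 (Nat.lt_one_iff.1 h), pderiv_C]

theorem isUnit_det_jacobian_of_surjective (hf : Function.Surjective (aeval (R := R) f)) :
    IsUnit (jacobian f).det := by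
  choose g hg using fun i => hf (X i)
  refine Matrix.isUnit_det_of_left_inverse (B := (jacobian g).map (aeval f)) ?_
  rw [← jacobian_aeval]
  refine Matrix.ext fun i j => ?_
  simp only [jacobian, Matrix.of_apply, hg, pderiv_X, Matrix.one_apply, Pi.single_apply]

variable [IsDomain R]

theorem aeval_pderiv_eq_zero_of_aeval_eq_zero (hdet : (jacobian f).det ≠ 0) (L : σ)
    {p : MvPolynomial σ R} (hp : aeval f p = 0) : aeval f (pderiv L p) = 0 := by
  have key := det_jacobian_mul_aeval_pderiv f L p
  rw [hp] at key
  simpa [hdet] using key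

theorem totalDegree_aeval_pderiv_add_le (hdet : (jacobian f).det ≠ 0) (L : σ)
    (p : MvPolynomial σ R) (hp : aeval f (pderiv L p) ≠ 0) :
    ((aeval f (pderiv L p)).totalDegree : ℤ) + (f L).totalDegree ≤
      (aeval f p).totalDegree + (∑ i, ((f i).totalDegree : ℤ) - Fintype.card σ) := by
  have key := det_jacobian_mul_aeval_pderiv f L p
  have hq : 1 ≤ (aeval f p).totalDegree := by
    by_contra! h
    rw [totalDegree_eq_zero_iff_eq_C.1 (Nat.lt_one_iff.1 h)] at key
    simp only [pderiv_C, zero_mul, Finset.sum_const_zero] at key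
    exact mul_ne_zero hdet hp key
  have hnat : (aeval f (pderiv L p)).totalDegree ≤
      ((aeval f p).totalDegree - 1) + ∑ a ∈ Finset.univ.erase L, ((f a).totalDegree - 1) :=
    calc _ ≤ ((jacobian f).det * aeval f (pderiv L p)).totalDegree := by
          rw [totalDegree_mul_of_isDomain hdet hp]; exact Nat.le_add_left _ _
      _ ≤ _ := key ▸ totalDegree_finsetSum_le fun j _ => (totalDegree_mul _ _).trans
          (add_le_add (totalDegree_pderiv_le _ _) (totalDegree_adjugate_jacobian_le f j L))
  have hsum : ((∑ a ∈ Finset.univ.erase L, ((f a).totalDegree - 1) : ℕ) : ℤ) =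
      ∑ i, ((f i).totalDegree : ℤ) - (f L).totalDegree - (Fintype.card σ - 1) := by
    push_cast [Nat.cast_sub (one_le_totalDegree_of_det_jacobian_ne_zero f hdet _)]
    rw [Finset.sum_sub_distrib, Finset.sum_erase_eq_sub (Finset.mem_univ L),
      Finset.sum_const, Finset.card_erase_of_mem (Finset.mem_univ L), Finset.card_univ,
      nsmul_one, Nat.cast_sub (Fintype.card_pos_iff.2 ⟨L⟩), Nat.cast_one]
  omega

end CommRing

end MvPolynomial

theorem stmt14_general {K : Type*} [Field K]
    {n : ℕ} (f : Fin (n + 1) → MvPolynomial (Fin (n + 1)) K)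
    (hf : Function.Bijective
      ⇑(aeval f : MvPolynomial (Fin (n + 1)) K →ₐ[K] MvPolynomial (Fin (n + 1)) K))
    (P : MvPolynomial (Fin (n + 1)) K) (k : ℕ)
    (hQ : aeval f ((⇑(pderiv (Fin.last n)))^[k] P) ≠ 0) :
    ((aeval f ((⇑(pderiv (Fin.last n)))^[k] P)).totalDegree : ℤ)
        + (k : ℤ) * ((f (Fin.last n)).totalDegree : ℤ)
        - (k : ℤ) * ((∑ i, ((f i).totalDegree : ℤ)) - (n + 1))
      ≤ ((aeval f P).totalDegree : ℤ) := by
  have hdet : (jacobian f).det ≠ 0 := (isUnit_det_jacobian_of_surjective f hf.2).ne_zero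
  induction k with
  | zero => simp
  | succ k ih =>
    rw [Function.iterate_succ_apply'] at hQ ⊢
    have hstep := totalDegree_aeval_pderiv_add_le f hdet (Fin.last n) _ hQ
    have hprev := ih fun h => hQ (aeval_pderiv_eq_zero_of_aeval_eq_zero f hdet _ h)
    simp only [Fintype.card_fin, Nat.cast_add, Nat.cast_one] at hstep
    push_cast
    linarith

/-- Proposition (parachute inequality): with `∇ = d₁ + ⋯ + dₙ - n`, for every
polynomial `P` and every `k ≥ 0`,
`deg₁(P∘Φ) ≥ deg₁((∂^k P/∂xₙ^k)∘Φ) + k·dₙ - k·∇`.  Here there are `n+1` variables,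
`xₙ` is the last one, and the inequality is stated over `ℤ` under the (vacuity-removing)
hypothesis that `(∂^k P/∂xₙ^k)∘Φ ≠ 0` (its degree would otherwise be `-∞`). -/
theorem stmt14 {K : Type*} [Field K] [IsAlgClosed K] [CharZero K]
    {n : ℕ} (f : Fin (n + 1) → MvPolynomial (Fin (n + 1)) K)
    (hf : Function.Bijective
      ⇑(aeval f : MvPolynomial (Fin (n + 1)) K →ₐ[K] MvPolynomial (Fin (n + 1)) K))
    (P : MvPolynomial (Fin (n + 1)) K) (k : ℕ)
    (hQ : aeval f ((⇑(pderiv (Fin.last n)))^[k] P) ≠ 0) :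
    ((aeval f ((⇑(pderiv (Fin.last n)))^[k] P)).totalDegree : ℤ)
        + (k : ℤ) * ((f (Fin.last n)).totalDegree : ℤ)
        - (k : ℤ) * ((∑ i, ((f i).totalDegree : ℤ)) - (n + 1))
      ≤ ((aeval f P).totalDegree : ℤ) :=
  stmt14_general f hf P k hQ
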